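/- Let A ∈ ℝ^{m×m} and suppose ker(A) is spanned by l linearly independent vectors χ^1,…,χ^l ∈ ℝ^m with χ^λ_μ = K_μ > 0 for μ ∈ L_λ and χ^λ_μ = 0 for μ ∉ L_λ, where L_1,…,L_l partition {1,…,m} with enumerations i^λ_1,…,i^λ_{m_λ}, and let ℰ be the set of m−l consecutive pairs (i^λ_μ, i^λ_{μ+1}). Let Ỹ ∈ ℝ^{n×m}, let I_ℰ ∈ ℝ^{m×(m−l)} have column e^j − e^i for (i,j) ∈ ℰ, set M = Ỹ I_ℰ, and define κ ∈ ℝ^{m−l}_> by κ_{(i,j)} = K_j / K_i for (i,j) ∈ ℰ. If Z = {x ∈ ℝ^n_> : A x^{Ỹ} = 0} is nonempty and H ∈ ℝ^{n×(m−l)} is a generalized inverse of M^T (i.e. M^T H M^T = M^T), then x* := κ^{H^T} ∈ Z. -/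
import Mathlib


/-- For `x ∈ ℝ^ι` and `M ∈ ℝ^{ι×κ}`, the generalized monomial vector `x^M ∈ ℝ^κ`
with `(x^M)_j = ∏ i, x i ^ M i j` (real exponentiation). -/
noncomputable def matPow {ι κ : Type*} [Fintype ι] (x : ι → ℝ) (M : Matrix ι κ ℝ) : κ → ℝ :=
  fun j => ∏ i, x i ^ M i j

/-- The source vertex `i^λ_μ` of the consecutive pair `(i^λ_μ, i^λ_{μ+1})` in `ℰ`,
for an enumeration `φ` of `{1,…,m}` by classes `L_λ`. -/
def src {m l : ℕ} {mlam : Fin l → ℕ} (φ : ((lam : Fin l) × Fin (mlam lam)) ≃ Fin m)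
    (s : (lam : Fin l) × Fin (mlam lam - 1)) : Fin m :=
  φ ⟨s.1, ⟨s.2.1, by have := s.2.2; omega⟩⟩

/-- The target vertex `i^λ_{μ+1}` of the consecutive pair `(i^λ_μ, i^λ_{μ+1})` in `ℰ`. -/
def tgt {m l : ℕ} {mlam : Fin l → ℕ} (φ : ((lam : Fin l) × Fin (mlam lam)) ≃ Fin m)
    (s : (lam : Fin l) × Fin (mlam lam - 1)) : Fin m :=
  φ ⟨s.1, ⟨s.2.1 + 1, by have := s.2.2; omega⟩⟩

/-- The vector `χ^λ ∈ ℝ^m` with `χ^λ_μ = K_μ` for `μ ∈ L_λ` and `χ^λ_μ = 0` otherwise. -/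
def chi {m l : ℕ} {mlam : Fin l → ℕ} (φ : ((lam : Fin l) × Fin (mlam lam)) ≃ Fin m)
    (K : Fin m → ℝ) : Fin l → Fin m → ℝ :=
  fun lam μ => if (φ.symm μ).1 = lam then K μ else 0

/-- The matrix `I_ℰ` whose column for `(i,j) ∈ ℰ` is `e^j - e^i`. -/
def Imat {m l : ℕ} {mlam : Fin l → ℕ} (φ : ((lam : Fin l) × Fin (mlam lam)) ≃ Fin m) :
    Matrix (Fin m) ((lam : Fin l) × Fin (mlam lam - 1)) ℝ :=
  Matrix.of fun i s =>
    (if i = tgt φ s then 1 else 0) - (if i = src φ s then 1 else 0)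

lemma matPow_pos {ι κ : Type*} [Fintype ι] {x : ι → ℝ} (hx : ∀ i, 0 < x i)
    (M : Matrix ι κ ℝ) (j : κ) : 0 < matPow x M j :=
  Finset.prod_pos fun i _ => Real.rpow_pos_of_pos (hx i) _

lemma matPow_eq_exp {ι κ : Type*} [Fintype ι] {x : ι → ℝ} (hx : ∀ i, 0 < x i)
    (M : Matrix ι κ ℝ) (j : κ) :
    matPow x M j = Real.exp (∑ i, M i j * Real.log (x i)) := by
  rw [Real.exp_sum]
  exact Finset.prod_congr rfl fun i _ => by
    rw [Real.rpow_def_of_pos (hx i), mul_comm]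

lemma tgt_ne_src {m l : ℕ} {mlam : Fin l → ℕ} (φ : ((lam : Fin l) × Fin (mlam lam)) ≃ Fin m)
    (s : (lam : Fin l) × Fin (mlam lam - 1)) : tgt φ s ≠ src φ s := by
  intro h
  have h2 := φ.injective h
  rw [Sigma.ext_iff] at h2
  simp only [heq_eq_eq, Fin.mk.injEq] at h2
  omega

lemma tgt_class {m l : ℕ} {mlam : Fin l → ℕ} (φ : ((lam : Fin l) × Fin (mlam lam)) ≃ Fin m)
    (s : (lam : Fin l) × Fin (mlam lam - 1)) : (φ.symm (tgt φ s)).1 = s.1 := by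
  rw [tgt, Equiv.symm_apply_apply]

lemma src_class {m l : ℕ} {mlam : Fin l → ℕ} (φ : ((lam : Fin l) × Fin (mlam lam)) ≃ Fin m)
    (s : (lam : Fin l) × Fin (mlam lam - 1)) : (φ.symm (src φ s)).1 = s.1 := by
  rw [src, Equiv.symm_apply_apply]

lemma Imat_sum {m l : ℕ} {mlam : Fin l → ℕ} (φ : ((lam : Fin l) × Fin (mlam lam)) ≃ Fin m)
    (s : (lam : Fin l) × Fin (mlam lam - 1)) (f : Fin m → ℝ) :
    ∑ μ, Imat φ μ s * f μ = f (tgt φ s) - f (src φ s) := by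
  simp only [Imat, Matrix.of_apply, sub_mul, ite_mul, one_mul, zero_mul,
    Finset.sum_sub_distrib]
  rw [Finset.sum_ite_eq' Finset.univ (tgt φ s) f, Finset.sum_ite_eq' Finset.univ (src φ s) f]
  simp

lemma mulImat_sum {m l n : ℕ} {mlam : Fin l → ℕ} (φ : ((lam : Fin l) × Fin (mlam lam)) ≃ Fin m)
    (Yt : Matrix (Fin n) (Fin m) ℝ) (s : (lam : Fin l) × Fin (mlam lam - 1)) (v : Fin n → ℝ) :
    ∑ i, (Yt * Imat φ) i s * v i =
      (∑ i, Yt i (tgt φ s) * v i) - (∑ i, Yt i (src φ s) * v i) := by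
  have : ∑ i, (Yt * Imat φ) i s * v i = ∑ μ, Imat φ μ s * ∑ i, Yt i μ * v i := by
    simp only [Matrix.mul_apply, Finset.sum_mul, Finset.mul_sum]
    rw [Finset.sum_comm]
    exact Finset.sum_congr rfl fun μ _ => Finset.sum_congr rfl fun i _ => by ring
  rw [this, Imat_sum]

lemma chi_sum {m l : ℕ} {mlam : Fin l → ℕ} (φ : ((lam : Fin l) × Fin (mlam lam)) ≃ Fin m)
    (K : Fin m → ℝ) (c : Fin l → ℝ) (μ : Fin m) :
    ∑ lam, c lam * chi φ K lam μ = c (φ.symm μ).1 * K μ := by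
  simp only [chi, mul_ite, mul_zero]
  rw [Finset.sum_ite_eq Finset.univ (φ.symm μ).1 (fun lam => c lam * K μ)]
  simp

/-- under the kernel-structure assumption on `A`, with `M = Ỹ I_ℰ` and
`κ_{(i,j)} = K_j / K_i`: if `A x^Ỹ = 0` has a positive solution and `H` is a
generalized inverse of `Mᵀ`, then `x* := κ^{Hᵀ}` is a positive solution. -/
theorem stmt12 {m l n : ℕ} {A : Matrix (Fin m) (Fin m) ℝ}
    {mlam : Fin l → ℕ} (hml : ∀ lam, 0 < mlam lam)
    (φ : ((lam : Fin l) × Fin (mlam lam)) ≃ Fin m)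
    (K : Fin m → ℝ) (hK : ∀ μ, 0 < K μ)
    (hind : LinearIndependent ℝ (chi φ K))
    (hker : LinearMap.ker A.mulVecLin = Submodule.span ℝ (Set.range (chi φ K)))
    (Yt : Matrix (Fin n) (Fin m) ℝ)
    (hZ : ∃ x : Fin n → ℝ, (∀ i, 0 < x i) ∧ A.mulVec (matPow x Yt) = 0)
    (H : Matrix (Fin n) ((lam : Fin l) × Fin (mlam lam - 1)) ℝ)
    (hH : (Yt * Imat φ).transpose * H * (Yt * Imat φ).transpose = (Yt * Imat φ).transpose) :
    (∀ i, 0 < matPow (fun s => K (tgt φ s) / K (src φ s)) H.transpose i) ∧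
      A.mulVec (matPow (matPow (fun s => K (tgt φ s) / K (src φ s)) H.transpose) Yt) = 0 := by
  classical
  obtain ⟨x, hx, hAx⟩ := hZ
  set u : Fin m → ℝ := matPow x Yt with hu_def
  have hu : ∀ μ, 0 < u μ := fun μ => matPow_pos hx Yt μ
  have humem : u ∈ Submodule.span ℝ (Set.range (chi φ K)) := by
    rw [← hker, LinearMap.mem_ker, Matrix.mulVecLin_apply]
    exact hAx
  obtain ⟨c, hc⟩ := (Submodule.mem_span_range_iff_exists_fun ℝ).1 humem
  have hcu : ∀ μ, u μ = c (φ.symm μ).1 * K μ := by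
    intro μ
    have h1 := congrFun hc μ
    simp only [Finset.sum_apply, Pi.smul_apply, smul_eq_mul] at h1
    rw [← h1, chi_sum]
  -- logs
  set y : Fin n → ℝ := fun i => Real.log (x i) with hy_def
  set g : _ → ℝ := fun s => Real.log (K (tgt φ s)) - Real.log (K (src φ s)) with hg_def
  have hlogu : ∀ μ, ∑ i, Yt i μ * y i = Real.log (u μ) := by
    intro μ
    rw [hu_def, matPow_eq_exp hx, Real.log_exp]
  have hcne : ∀ μ, c (φ.symm μ).1 ≠ 0 := by
    intro μ hc0
    have := hcu μ
    rw [hc0, zero_mul] at this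
    exact absurd this (hu μ).ne'
  have hg : ∀ s, ∑ i, (Yt * Imat φ) i s * y i = g s := by
    intro s
    rw [mulImat_sum, hlogu, hlogu, hcu (tgt φ s), hcu (src φ s),
      Real.log_mul (hcne (tgt φ s)) (hK _).ne', Real.log_mul (hcne (src φ s)) (hK _).ne',
      tgt_class, src_class]
    simp only [hg_def]
    ring
  set M' := (Yt * Imat φ).transpose with hM'_def
  have hgM : M'.mulVec y = g := by
    funext s
    simp only [hM'_def, Matrix.mulVec, dotProduct, Matrix.transpose_apply]
    exact hg s
  set v : Fin n → ℝ := H.mulVec g with hv_def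
  have hMv : M'.mulVec v = g := by
    rw [hv_def, ← hgM, Matrix.mulVec_mulVec, Matrix.mulVec_mulVec, hH, hgM]
  set xs : Fin n → ℝ := matPow (fun s => K (tgt φ s) / K (src φ s)) H.transpose with hxs_def
  have hkpos : ∀ s : (lam : Fin l) × Fin (mlam lam - 1), 0 < K (tgt φ s) / K (src φ s) :=
    fun s => div_pos (hK _) (hK _)
  have hxs_pos : ∀ i, 0 < xs i := fun i => matPow_pos hkpos _ i
  refine ⟨hxs_pos, ?_⟩
  have hlogxs : ∀ i, Real.log (xs i) = v i := by
    intro i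
    rw [hxs_def, matPow_eq_exp hkpos, Real.log_exp, hv_def]
    simp only [Matrix.mulVec, dotProduct, Matrix.transpose_apply]
    exact Finset.sum_congr rfl fun s _ => by
      rw [Real.log_div (hK _).ne' (hK _).ne']
  set w : Fin m → ℝ := matPow xs Yt with hw_def
  have hwpos : ∀ μ, 0 < w μ := fun μ => matPow_pos hxs_pos Yt μ
  have hwexp : ∀ μ, w μ = Real.exp (∑ i, Yt i μ * v i) := by
    intro μ
    rw [hw_def, matPow_eq_exp hxs_pos]
    congr 1
    exact Finset.sum_congr rfl fun i _ => by rw [hlogxs]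
  have hw_edge : ∀ s, w (tgt φ s) * K (src φ s) = w (src φ s) * K (tgt φ s) := by
    intro s
    have h1 : (∑ i, Yt i (tgt φ s) * v i) - (∑ i, Yt i (src φ s) * v i) = g s := by
      rw [← mulImat_sum]
      have h2 := congrFun hMv s
      simp only [hM'_def, Matrix.mulVec, dotProduct, Matrix.transpose_apply] at h2
      exact h2
    rw [hwexp, hwexp]
    rw [← Real.exp_log (hK (src φ s)), ← Real.exp_log (hK (tgt φ s)), ← Real.exp_add,
      ← Real.exp_add]
    congr 1
    simp only [hg_def] at h1
    linarith
  -- w is constant multiple of K on each class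
  set d : Fin l → ℝ := fun lam =>
    w (φ ⟨lam, ⟨0, hml lam⟩⟩) / K (φ ⟨lam, ⟨0, hml lam⟩⟩) with hd_def
  have haux : ∀ (lam : Fin l) (j : ℕ) (hj : j < mlam lam),
      w (φ ⟨lam, ⟨j, hj⟩⟩) * K (φ ⟨lam, ⟨0, hml lam⟩⟩) =
        w (φ ⟨lam, ⟨0, hml lam⟩⟩) * K (φ ⟨lam, ⟨j, hj⟩⟩) := by
    intro lam j
    induction j with
    | zero => intro hj; ring
    | succ j ih =>
      intro hj
      have hj' : j < mlam lam := by omega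
      have hs : j < mlam lam - 1 := by omega
      have hedge := hw_edge ⟨lam, ⟨j, hs⟩⟩
      have hsrc : src φ ⟨lam, ⟨j, hs⟩⟩ = φ ⟨lam, ⟨j, hj'⟩⟩ := rfl
      have htgt : tgt φ ⟨lam, ⟨j, hs⟩⟩ = φ ⟨lam, ⟨j + 1, hj⟩⟩ := rfl
      rw [hsrc, htgt] at hedge
      have hIH := ih hj'
      have hKne : K (φ ⟨lam, ⟨j, hj'⟩⟩) ≠ 0 := (hK _).ne'
      apply mul_right_cancel₀ hKne
      linear_combination K (φ ⟨lam, ⟨0, hml lam⟩⟩) * hedge + K (φ ⟨lam, ⟨j + 1, hj⟩⟩) * hIH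
  have hwd : ∀ μ, w μ = d (φ.symm μ).1 * K μ := by
    intro μ
    obtain ⟨⟨lam, k⟩, rfl⟩ := φ.surjective μ
    rw [Equiv.symm_apply_apply]
    have := haux lam k.1 k.2
    have hk : (⟨k.1, k.2⟩ : Fin (mlam lam)) = k := rfl
    rw [hk] at this
    rw [hd_def]
    show _ = w (φ ⟨lam, ⟨0, hml lam⟩⟩) / K (φ ⟨lam, ⟨0, hml lam⟩⟩) * K (φ ⟨lam, k⟩)
    rw [div_mul_eq_mul_div, eq_div_iff (hK (φ ⟨lam, ⟨0, hml lam⟩⟩)).ne']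
    linarith [this]
  have hwmem : w ∈ Submodule.span ℝ (Set.range (chi φ K)) := by
    refine (Submodule.mem_span_range_iff_exists_fun ℝ).2 ⟨d, funext fun μ => ?_⟩
    simp only [Finset.sum_apply, Pi.smul_apply, smul_eq_mul]
    rw [chi_sum, ← hwd]
  rw [← hker, LinearMap.mem_ker, Matrix.mulVecLin_apply] at hwmem
  exact hwmem
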